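/- For n ≥ 2, the copositive minimum of the tridiagonal matrix Q_{A_n} equals 2, and the set of nonnegative integer vectors attaining it is exactly { Σ_{i=j}^{k} e_i : 1 ≤ j ≤ k ≤ n }, i.e., the 0/1-vectors with a single contiguous block of ones. -/
import Mathlib


open Matrix

/-- The quadratic form `B[x] = xᵀ B x`. -/
def quadForm {n : ℕ} (B : Matrix (Fin n) (Fin n) ℝ) (x : Fin n → ℝ) : ℝ :=
  x ⬝ᵥ B.mulVec x

/-- The Gram matrix `Q_{A_n}` of the root lattice `A_n`. -/
def QAn (n : ℕ) : Matrix (Fin n) (Fin n) ℝ :=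
  Matrix.of fun i j =>
    if i = j then 2
    else if i.val = j.val + 1 ∨ j.val = i.val + 1 then -1
    else 0

/-- The copositive minimum. -/
noncomputable def copositiveMin {n : ℕ} (B : Matrix (Fin n) (Fin n) ℝ) : ℝ :=
  sInf {t : ℝ | ∃ v : Fin n → ℤ, (∀ i, 0 ≤ v i) ∧ v ≠ 0 ∧
    t = quadForm B (fun i => (v i : ℝ))}

open Finset

section Aux

lemma hQ (m : ℕ) (i j : Fin (m+1)) : QAn (m+1) i j =
    (if j = i then 2 else 0)
  + (if j.val = i.val + 1 then (-1:ℝ) else 0)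
  + (if j.val + 1 = i.val then (-1:ℝ) else 0) := by
  simp only [QAn, Matrix.of_apply]
  split_ifs <;> simp_all [Fin.ext_iff] <;> omega

lemma mulVec_QAn (m : ℕ) (x : Fin (m+1) → ℝ) (i : Fin (m+1)) :
    (QAn (m+1)).mulVec x i = 2 * x i
      - (if h : i.val < m then x ⟨i.val+1, by omega⟩ else 0)
      - (if h : 0 < i.val then x ⟨i.val-1, by omega⟩ else 0) := by
  unfold Matrix.mulVec dotProduct
  simp only [hQ, add_mul, Finset.sum_add_distrib]
  have e1 : ∑ j : Fin (m+1), (if j = i then (2:ℝ) else 0) * x j = 2 * x i := by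
    rw [Finset.sum_congr rfl (fun j _ => by rw [ite_mul, zero_mul]),
      Finset.sum_ite_eq' Finset.univ i (fun j => 2 * x j)]
    simp
  have e2 : ∑ j : Fin (m+1), (if j.val = i.val + 1 then (-1:ℝ) else 0) * x j
      = -(if h : i.val < m then x ⟨i.val+1, by omega⟩ else 0) := by
    by_cases h : i.val < m
    · have hc : ∀ j : Fin (m+1), (if j.val = i.val + 1 then (-1:ℝ) else 0) * x j
          = if j = ⟨i.val+1, by omega⟩ then -1 * x j else 0 := by
        intro j
        by_cases hj : j = ⟨i.val+1, by omega⟩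
        · simp [hj]
        · rw [if_neg hj, if_neg (by simpa [Fin.ext_iff] using hj), zero_mul]
      rw [Finset.sum_congr rfl (fun j _ => hc j),
        Finset.sum_ite_eq' Finset.univ (⟨i.val+1, by omega⟩ : Fin (m+1)) (fun j => -1 * x j)]
      simp [h]
    · rw [dif_neg h, Finset.sum_eq_zero, neg_zero]
      intro j _
      have := j.isLt
      have := i.isLt
      rw [if_neg (by omega), zero_mul]
  have e3 : ∑ j : Fin (m+1), (if j.val + 1 = i.val then (-1:ℝ) else 0) * x j
      = -(if h : 0 < i.val then x ⟨i.val-1, by omega⟩ else 0) := by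
    by_cases h : 0 < i.val
    · have hc : ∀ j : Fin (m+1), (if j.val + 1 = i.val then (-1:ℝ) else 0) * x j
          = if j = ⟨i.val-1, by omega⟩ then -1 * x j else 0 := by
        intro j
        by_cases hj : j = ⟨i.val-1, by omega⟩
        · rw [if_pos hj, if_pos (by simp [hj]; omega)]
        · rw [if_neg hj, if_neg (fun hc => hj (by simp [Fin.ext_iff]; omega)), zero_mul]
      rw [Finset.sum_congr rfl (fun j _ => hc j),
        Finset.sum_ite_eq' Finset.univ (⟨i.val-1, by omega⟩ : Fin (m+1)) (fun j => -1 * x j)]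
      simp [h]
    · rw [dif_neg h, Finset.sum_eq_zero, neg_zero]
      intro j _
      rw [if_neg (by omega), zero_mul]
  rw [e1, e2, e3]
  ring

lemma quadForm_QAn (m : ℕ) (x : Fin (m+1) → ℝ) :
    quadForm (QAn (m+1)) x
      = x 0 ^ 2 + x (Fin.last m) ^ 2 + ∑ i : Fin m, (x i.castSucc - x i.succ)^2 := by
  have hA : ∑ i : Fin (m+1), x i * (if h : i.val < m then x ⟨i.val+1, by omega⟩ else 0)
      = ∑ j : Fin m, x j.castSucc * x j.succ := by
    rw [Fin.sum_univ_castSucc]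
    rw [dif_neg (by simp), mul_zero, add_zero]
    refine Finset.sum_congr rfl fun j _ => ?_
    rw [dif_pos (by simpa using j.isLt)]
    exact congrArg (fun y => x j.castSucc * x y) (Fin.ext (by simp))
  have hB : ∑ i : Fin (m+1), x i * (if h : 0 < i.val then x ⟨i.val-1, by omega⟩ else 0)
      = ∑ j : Fin m, x j.succ * x j.castSucc := by
    rw [Fin.sum_univ_succ]
    rw [dif_neg (by simp), mul_zero, zero_add]
    refine Finset.sum_congr rfl fun j _ => ?_
    rw [dif_pos (by simp)]
    exact congrArg (fun y => x j.succ * x y) (Fin.ext (by simp))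
  have hL : quadForm (QAn (m+1)) x
      = 2 * (∑ i : Fin (m+1), x i ^ 2)
        - (∑ i : Fin (m+1), x i * (if h : i.val < m then x ⟨i.val+1, by omega⟩ else 0))
        - (∑ i : Fin (m+1), x i * (if h : 0 < i.val then x ⟨i.val-1, by omega⟩ else 0)) := by
    unfold quadForm dotProduct
    simp only [mulVec_QAn, mul_sub]
    rw [Finset.sum_sub_distrib, Finset.sum_sub_distrib]
    congr 2
    rw [Finset.mul_sum]
    exact Finset.sum_congr rfl fun i _ => by ring
  have hc : ∑ i : Fin (m+1), x i ^ 2 = (∑ j : Fin m, x j.castSucc ^ 2) + x (Fin.last m) ^ 2 :=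
    Fin.sum_univ_castSucc (fun i => x i ^ 2)
  have hs : ∑ i : Fin (m+1), x i ^ 2 = x 0 ^ 2 + ∑ j : Fin m, x j.succ ^ 2 :=
    Fin.sum_univ_succ (fun i => x i ^ 2)
  have hsq : ∑ j : Fin m, (x j.castSucc - x j.succ)^2
      = (∑ j : Fin m, x j.castSucc ^ 2) + (∑ j : Fin m, x j.succ ^ 2)
        - 2 * ∑ j : Fin m, x j.castSucc * x j.succ := by
    rw [Finset.sum_congr rfl (fun j _ => (by ring :
        (x j.castSucc - x j.succ)^2
          = x j.castSucc ^ 2 + x j.succ ^ 2 - 2 * (x j.castSucc * x j.succ))),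
      Finset.sum_sub_distrib, Finset.sum_add_distrib, ← Finset.mul_sum]
  have hBA : ∑ j : Fin m, x j.succ * x j.castSucc = ∑ j : Fin m, x j.castSucc * x j.succ :=
    Finset.sum_congr rfl fun j _ => mul_comm _ _
  rw [hL, hA, hB, hBA, hsq]
  linarith

/-- The integer-valued sum of squares form. -/
def Tz (m : ℕ) (v : Fin (m+1) → ℤ) : ℤ :=
  (v 0)^2 + (v (Fin.last m))^2 + ∑ i : Fin m, (v i.castSucc - v i.succ)^2

/-- Extension of `v` to `ℕ`. -/
def ext' (m : ℕ) (v : Fin (m+1) → ℤ) : ℕ → ℤ :=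
  fun t => if h : t < m + 1 then v ⟨t, h⟩ else 0

lemma ext'_val (m : ℕ) (v : Fin (m+1) → ℤ) (i : Fin (m+1)) : ext' m v i.val = v i := by
  simp [ext', i.isLt]

lemma Tz_eq (m : ℕ) (v : Fin (m+1) → ℤ) :
    Tz m v = (ext' m v 0)^2 + (ext' m v m)^2
      + ∑ t ∈ range m, (ext' m v t - ext' m v (t+1))^2 := by
  have h0 : ext' m v 0 = v 0 := ext'_val m v 0
  have hm : ext' m v m = v (Fin.last m) := ext'_val m v (Fin.last m)
  rw [Tz, h0, hm]
  congr 1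
  rw [← Fin.sum_univ_eq_sum_range (fun t => (ext' m v t - ext' m v (t+1))^2) m]
  refine Finset.sum_congr rfl fun i _ => ?_
  have h1 : ext' m v i.val = v i.castSucc := by
    rw [← ext'_val m v i.castSucc, Fin.coe_castSucc]
  have h2 : ext' m v (i.val+1) = v i.succ := by
    rw [← ext'_val m v i.succ, Fin.val_succ]
  rw [h1, h2]

lemma int_abs_le_sq (a : ℤ) : |a| ≤ a^2 := by
  rcases eq_or_ne a 0 with h | h
  · simp [h]
  · have h1 : 1 ≤ |a| := Int.one_le_abs h
    calc |a| = 1 * |a| := (one_mul _).symm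
    _ ≤ |a| * |a| := by nlinarith
    _ = a ^ 2 := by rw [abs_mul_abs_self a, sq]

lemma tele (u : ℕ → ℤ) (a b : ℕ) (h : a ≤ b) :
    u a - u b = ∑ t ∈ Finset.Ico a b, (u t - u (t+1)) := by
  induction b, h using Nat.le_induction with
  | base => simp
  | succ b hb ih => rw [Finset.sum_Ico_succ_top hb, ← ih]; ring

lemma absle (u : ℕ → ℤ) (a b : ℕ) (h : a ≤ b) :
    |u a - u b| ≤ ∑ t ∈ Finset.Ico a b, (u t - u (t+1))^2 := by
  rw [tele u a b h]
  calc |∑ t ∈ Finset.Ico a b, (u t - u (t+1))| ≤ ∑ t ∈ Finset.Ico a b, |u t - u (t+1)| :=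
        Finset.abs_sum_le_sum_abs _ _
  _ ≤ ∑ t ∈ Finset.Ico a b, (u t - u (t+1))^2 :=
        Finset.sum_le_sum fun t _ => int_abs_le_sq _

lemma two_mul_le (m : ℕ) (v : Fin (m+1) → ℤ) (i : Fin (m+1)) :
    2 * v i ≤ Tz m v := by
  set u := ext' m v with hu
  have ha : i.val ≤ m := by omega
  have hvi : v i = u i.val := (ext'_val m v i).symm
  have hL : |u 0 - u i.val| ≤ ∑ t ∈ Finset.Ico 0 i.val, (u t - u (t+1))^2 :=
    absle u 0 i.val (Nat.zero_le _)
  have hR : |u i.val - u m| ≤ ∑ t ∈ Finset.Ico i.val m, (u t - u (t+1))^2 :=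
    absle u i.val m ha
  have hsplit : (∑ t ∈ Finset.Ico 0 i.val, (u t - u (t+1))^2)
      + ∑ t ∈ Finset.Ico i.val m, (u t - u (t+1))^2
      = ∑ t ∈ range m, (u t - u (t+1))^2 := by
    rw [Finset.range_eq_Ico]
    exact Finset.sum_Ico_consecutive _ (Nat.zero_le _) ha
  have h1 : u i.val ≤ |u 0| + |u 0 - u i.val| := by
    have := abs_sub_abs_le_abs_sub (u i.val) (u 0)
    have := le_abs_self (u i.val)
    have := abs_sub_comm (u 0) (u i.val)
    nlinarith [abs_nonneg (u 0 - u i.val)]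
  have h2 : u i.val ≤ |u m| + |u i.val - u m| := by
    have := abs_sub_abs_le_abs_sub (u i.val) (u m)
    have := le_abs_self (u i.val)
    nlinarith [abs_nonneg (u i.val - u m)]
  have hs0 : |u 0| ≤ (u 0)^2 := int_abs_le_sq _
  have hsm : |u m| ≤ (u m)^2 := int_abs_le_sq _
  rw [Tz_eq, ← hu, ← hsplit, hvi]
  linarith

/-- A 0/1-vector with a contiguous block of ones. -/
def blockv (m : ℕ) (j k : Fin (m+1)) : Fin (m+1) → ℤ :=
  fun i => if j ≤ i ∧ i ≤ k then 1 else 0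

lemma Tz_block (m : ℕ) (j k : Fin (m+1)) (hjk : j ≤ k) : Tz m (blockv m j k) = 2 := by
  have hj := j.isLt
  have hk := k.isLt
  have hjk' : j.val ≤ k.val := hjk
  have hb0 : blockv m j k 0 = if j.val = 0 then 1 else 0 := by
    unfold blockv
    refine if_congr ?_ rfl rfl
    simp only [Fin.le_def, Fin.val_zero]
    omega
  have hbl : blockv m j k (Fin.last m) = if k.val = m then 1 else 0 := by
    unfold blockv
    refine if_congr ?_ rfl rfl
    simp only [Fin.le_def, Fin.val_last]
    omega
  have hd : ∀ i : Fin m, (blockv m j k i.castSucc - blockv m j k i.succ)^2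
      = ((if i.val + 1 = j.val then 1 else 0) + (if i.val = k.val then 1 else 0) : ℤ) := by
    intro i
    simp only [blockv, Fin.le_def, Fin.coe_castSucc, Fin.val_succ]
    split_ifs <;> first | (exfalso; omega) | norm_num
  have hs1 : ∑ i : Fin m, ((if i.val + 1 = j.val then 1 else 0) : ℤ)
      = if 0 < j.val then 1 else 0 := by
    rw [Fin.sum_univ_eq_sum_range (fun t => if t + 1 = j.val then (1:ℤ) else 0) m]
    by_cases h : 0 < j.val
    · rw [if_pos h]
      rw [Finset.sum_congr rfl (fun t _ =>
          if_congr (by omega : (t + 1 = j.val) ↔ (t = j.val - 1)) rfl rfl),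
        Finset.sum_ite_eq' (range m) (j.val - 1) (fun _ => (1:ℤ)), if_pos (by simp; omega)]
    · rw [if_neg h, Finset.sum_eq_zero]
      intro t _
      rw [if_neg (by omega)]
  have hs2 : ∑ i : Fin m, ((if i.val = k.val then 1 else 0) : ℤ)
      = if k.val < m then 1 else 0 := by
    rw [Fin.sum_univ_eq_sum_range (fun t => if t = k.val then (1:ℤ) else 0) m,
      Finset.sum_ite_eq' (range m) k.val (fun _ => (1:ℤ))]
    simp
  rw [Tz, hb0, hbl, Finset.sum_congr rfl (fun i _ => hd i), Finset.sum_add_distrib, hs1, hs2]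
  split_ifs <;> first | (exfalso; omega) | norm_num

lemma aux1 (a b : ℤ) : a ≤ |b| + |b - a| := by
  have h1 := le_abs_self a
  have h2 := abs_sub_abs_le_abs_sub a b
  have h3 := abs_sub_comm a b
  linarith

lemma eq_case (m : ℕ) (v : Fin (m+1) → ℤ) (hnn : ∀ i, 0 ≤ v i) (hne : v ≠ 0)
    (h2 : Tz m v = 2) :
    ∃ j k : Fin (m+1), j ≤ k ∧ ∀ i, v i = if j ≤ i ∧ i ≤ k then 1 else 0 := by
  classical
  set s : Finset (Fin (m+1)) := Finset.univ.filter (fun i => v i ≠ 0) with hs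
  have hsne : s.Nonempty := by
    obtain ⟨i, hi⟩ := Function.ne_iff.1 hne
    refine ⟨i, by simp [hs]; simpa using hi⟩
  set j := s.min' hsne with hj
  set k := s.max' hsne with hk
  have hjs : j ∈ s := s.min'_mem hsne
  have hks : k ∈ s := s.max'_mem hsne
  have hone : ∀ i, v i ≤ 1 := fun i => by have := two_mul_le m v i; omega
  have hvj : v j = 1 := by
    have h := (Finset.mem_filter.1 hjs).2
    have := hnn j; have := hone j; omega
  have hvk : v k = 1 := by
    have h := (Finset.mem_filter.1 hks).2
    have := hnn k; have := hone k; omega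
  have hjk : j ≤ k := s.min'_le k hks
  refine ⟨j, k, hjk, fun i => ?_⟩
  by_cases hi : j ≤ i ∧ i ≤ k
  · rw [if_pos hi]
    by_contra hvi'
    have hvi : v i = 0 := by have := hnn i; have := hone i; omega
    set u := ext' m v with hu
    have hji : j.val ≤ i.val := hi.1
    have hik : i.val ≤ k.val := hi.2
    have hkm : k.val ≤ m := by omega
    have huj : u j.val = 1 := by rw [hu, ext'_val]; exact hvj
    have hui : u i.val = 0 := by rw [hu, ext'_val]; exact hvi
    have huk : u k.val = 1 := by rw [hu, ext'_val]; exact hvk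
    have hA : (1:ℤ) ≤ |u 0| + ∑ t ∈ Finset.Ico 0 j.val, (u t - u (t+1))^2 := by
      have t1 := aux1 (u j.val) (u 0)
      have t2 := absle u 0 j.val (Nat.zero_le _)
      linarith
    have hB : (1:ℤ) ≤ ∑ t ∈ Finset.Ico j.val i.val, (u t - u (t+1))^2 := by
      have := absle u j.val i.val hji
      rw [huj, hui] at this
      simpa using this
    have hC : (1:ℤ) ≤ ∑ t ∈ Finset.Ico i.val k.val, (u t - u (t+1))^2 := by
      have := absle u i.val k.val hik
      rw [hui, huk] at this
      simpa using this
    have hD : (1:ℤ) ≤ |u m| + ∑ t ∈ Finset.Ico k.val m, (u t - u (t+1))^2 := by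
      have h4 := aux1 (u k.val) (u m)
      have h5 := absle u k.val m hkm
      have h6 := abs_sub_comm (u k.val) (u m)
      linarith
    have hsp1 : (∑ t ∈ Finset.Ico 0 j.val, (u t - u (t+1))^2)
        + ∑ t ∈ Finset.Ico j.val i.val, (u t - u (t+1))^2
        = ∑ t ∈ Finset.Ico 0 i.val, (u t - u (t+1))^2 :=
      Finset.sum_Ico_consecutive _ (Nat.zero_le _) hji
    have hsp2 : (∑ t ∈ Finset.Ico 0 i.val, (u t - u (t+1))^2)
        + ∑ t ∈ Finset.Ico i.val k.val, (u t - u (t+1))^2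
        = ∑ t ∈ Finset.Ico 0 k.val, (u t - u (t+1))^2 :=
      Finset.sum_Ico_consecutive _ (Nat.zero_le _) hik
    have hsp3 : (∑ t ∈ Finset.Ico 0 k.val, (u t - u (t+1))^2)
        + ∑ t ∈ Finset.Ico k.val m, (u t - u (t+1))^2
        = ∑ t ∈ Finset.Ico 0 m, (u t - u (t+1))^2 :=
      Finset.sum_Ico_consecutive _ (Nat.zero_le _) hkm
    have hTz : Tz m v = (u 0)^2 + (u m)^2 + ∑ t ∈ Finset.Ico 0 m, (u t - u (t+1))^2 := by
      rw [Tz_eq, ← Finset.range_eq_Ico]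
    have hs0 := int_abs_le_sq (u 0)
    have hsm := int_abs_le_sq (u m)
    rw [h2] at hTz
    linarith
  · rw [if_neg hi]
    by_contra hvi'
    have hvi : v i ≠ 0 := fun h => hvi' h
    have his : i ∈ s := by simp [hs, hvi]
    exact hi ⟨s.min'_le i his, s.le_max' i his⟩

lemma quadForm_cast (m : ℕ) (v : Fin (m+1) → ℤ) :
    quadForm (QAn (m+1)) (fun i => (v i : ℝ)) = (Tz m v : ℝ) := by
  rw [quadForm_QAn]
  simp only [Tz]
  push_cast
  ring

lemma Tz_lower (m : ℕ) (v : Fin (m+1) → ℤ) (hnn : ∀ i, 0 ≤ v i) (hne : v ≠ 0) :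
    2 ≤ Tz m v := by
  obtain ⟨i, hi⟩ := Function.ne_iff.1 hne
  have hi' : v i ≠ 0 := by simpa using hi
  have := two_mul_le m v i
  have := hnn i
  omega

end Aux

theorem minCop_QAn {n : ℕ} (hn : 2 ≤ n) :
    copositiveMin (QAn n) = 2 ∧
    {v : Fin n → ℤ | (∀ i, 0 ≤ v i) ∧ v ≠ 0 ∧ quadForm (QAn n) (fun i => (v i : ℝ)) = 2}
      = {v : Fin n → ℤ | ∃ j k : Fin n, j ≤ k ∧
          ∀ i : Fin n, v i = if j ≤ i ∧ i ≤ k then 1 else 0} := by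
  obtain ⟨m, rfl⟩ : ∃ m, n = m + 1 := ⟨n - 1, by omega⟩
  have hbnn : ∀ (j k : Fin (m+1)) (i : Fin (m+1)), 0 ≤ blockv m j k i := by
    intro j k i
    unfold blockv
    split_ifs <;> norm_num
  have hbne : ∀ (j k : Fin (m+1)), j ≤ k → blockv m j k ≠ 0 := by
    intro j k hjk h0
    have h1 : blockv m j k j = 1 := by
      unfold blockv
      rw [if_pos ⟨le_refl j, hjk⟩]
    rw [h0] at h1
    simp at h1
  have hmem : (2:ℝ) ∈ {t : ℝ | ∃ v : Fin (m+1) → ℤ, (∀ i, 0 ≤ v i) ∧ v ≠ 0 ∧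
      t = quadForm (QAn (m+1)) (fun i => (v i : ℝ))} := by
    refine ⟨blockv m 0 0, hbnn 0 0, hbne 0 0 le_rfl, ?_⟩
    rw [quadForm_cast, Tz_block m 0 0 le_rfl]
    norm_num
  have hlb : ∀ t ∈ {t : ℝ | ∃ v : Fin (m+1) → ℤ, (∀ i, 0 ≤ v i) ∧ v ≠ 0 ∧
      t = quadForm (QAn (m+1)) (fun i => (v i : ℝ))}, (2:ℝ) ≤ t := by
    rintro t ⟨v, hnn, hne, rfl⟩
    rw [quadForm_cast]
    exact_mod_cast Tz_lower m v hnn hne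
  constructor
  · exact le_antisymm (csInf_le ⟨2, hlb⟩ hmem) (le_csInf ⟨2, hmem⟩ hlb)
  · ext v
    simp only [Set.mem_setOf_eq]
    constructor
    · rintro ⟨hnn, hne, hq⟩
      have hTz : Tz m v = 2 := by
        rw [quadForm_cast] at hq
        exact_mod_cast hq
      exact eq_case m v hnn hne hTz
    · rintro ⟨j, k, hjk, hval⟩
      have hveq : v = blockv m j k := funext fun i => by rw [hval i]; rfl
      refine ⟨?_, ?_, ?_⟩
      · intro i
        rw [hveq]
        exact hbnn j k i
      · rw [hveq]
        exact hbne j k hjk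
      · rw [hveq, quadForm_cast, Tz_block m j k hjk]
        norm_num
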